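/- arXiv:2604.14370 — 2 statements merged into one kernel-verified Lean document; each statement's English description precedes it below -/
import Mathlib

section
/- Fix p_0 > 0, Δ_P > 0 with p_0 + Δ_P ≤ 1, ρ ∈ (p_0, p_0+Δ_P), constants N, μ > 0, and functions R : [0,1] → ℝ and m : [0,1] → (0,∞) such that R is continuously differentiable with a unique maximizer τ_s ∈ (0,1), R' > 0 on [0,τ_s) and R' < 0 on (τ_s,1]. Let τ_c = 1 − (ρ − p_0)/Δ_P ∈ (0,1) and define W(τ) = ρ·N·R(τ) for τ ≤ τ_c, and W(τ) = N·(p_0+Δ_P(1−τ))·R(τ) for τ > τ_c, and suppose W is continuous and W'(τ) = −N·Δ_P·m(τ) < 0 for τ > τ_c. Then W attains its maximum over [0,1] at τ* = min(τ_s, τ_c). -/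
/-- Two-point optimality (medium-capacity case): the fluid objective `W`,
equal to `ρ·N·R(τ)` for `τ ≤ τ_c` and `N·(p0+ΔP(1−τ))·R(τ)` for `τ > τ_c`, with `R`
single-peaked at `τ_s` and `W' = −N·ΔP·m < 0` beyond `τ_c`, attains its maximum over
`[0,1]` at `τ* = min(τ_s, τ_c)`. -/
theorem stmt_8 (p0 ΔP ρ N μ : ℝ) (hp0 : 0 < p0) (hΔ : 0 < ΔP) (hsum : p0 + ΔP ≤ 1)
    (hρ : ρ ∈ Set.Ioo p0 (p0 + ΔP)) (hN : 0 < N) (hμ : 0 < μ)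
    (R m : ℝ → ℝ)
    (hRdiff : ∀ τ ∈ Set.Icc (0 : ℝ) 1, DifferentiableAt ℝ R τ)
    (hRC : ContinuousOn (deriv R) (Set.Icc (0 : ℝ) 1))
    (τs : ℝ) (hτs : τs ∈ Set.Ioo (0 : ℝ) 1)
    (hmaxR : ∀ τ ∈ Set.Icc (0 : ℝ) 1, τ ≠ τs → R τ < R τs)
    (hpos : ∀ τ ∈ Set.Ico (0 : ℝ) τs, 0 < deriv R τ)
    (hneg : ∀ τ ∈ Set.Ioc τs 1, deriv R τ < 0)
    (hmpos : ∀ τ, 0 < m τ)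
    (τc : ℝ) (hτcdef : τc = 1 - (ρ - p0) / ΔP) (hτcIoo : τc ∈ Set.Ioo (0 : ℝ) 1)
    (W : ℝ → ℝ)
    (hW1 : ∀ τ ∈ Set.Icc (0 : ℝ) τc, W τ = ρ * N * R τ)
    (hW2 : ∀ τ ∈ Set.Ioc τc 1, W τ = N * (p0 + ΔP * (1 - τ)) * R τ)
    (hWc : ContinuousOn W (Set.Icc (0 : ℝ) 1))
    (hWd : ∀ τ ∈ Set.Ioo τc 1, deriv W τ = -(N * ΔP * m τ) ∧ deriv W τ < 0) :
    ∀ τ ∈ Set.Icc (0 : ℝ) 1, W τ ≤ W (min τs τc) := by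
  obtain ⟨hτc0, hτc1⟩ := hτcIoo
  obtain ⟨hτs0, hτs1⟩ := hτs
  have hρN : 0 < ρ * N := mul_pos (lt_trans hp0 hρ.1) hN
  -- R is monotone on [0, τs]
  have hRmono : StrictMonoOn R (Set.Icc 0 τs) := by
    apply StrictMonoOn.mono (s := Set.Icc 0 τs) ?_ (le_refl _)
    apply strictMonoOn_of_deriv_pos (convex_Icc 0 τs)
    · exact (ContinuousOn.mono (fun x hx => (hRdiff x hx).continuousAt.continuousWithinAt)
        (Set.Icc_subset_Icc (le_refl 0) hτs1.le))
    · intro x hx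
      rw [interior_Icc] at hx
      exact hpos x ⟨hx.1.le, hx.2⟩
  -- W is strictly antitone on [τc, 1]
  have hWanti : StrictAntiOn W (Set.Icc τc 1) := by
    apply strictAntiOn_of_deriv_neg (convex_Icc τc 1)
    · exact hWc.mono (Set.Icc_subset_Icc hτc0.le (le_refl 1))
    · intro x hx
      rw [interior_Icc] at hx
      exact (hWd x hx).2
  have hRle : ∀ τ ∈ Set.Icc (0:ℝ) 1, R τ ≤ R τs := by
    intro τ hτ
    by_cases h : τ = τs
    · simp [h]
    · exact (hmaxR τ hτ h).le
  have hWτc_le : W τc ≤ W (min τs τc) := by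
    rcases le_or_gt τs τc with h | h
    · rw [min_eq_left h, hW1 τc ⟨hτc0.le, le_refl _⟩, hW1 τs ⟨hτs0.le, h⟩]
      exact mul_le_mul_of_nonneg_left (hRle τc ⟨hτc0.le, hτc1.le⟩) hρN.le
    · rw [min_eq_right h.le]
  intro τ hτ
  rcases le_or_gt τ τc with hle | hgt
  · -- capacity region: W τ = ρ N R τ
    rw [hW1 τ ⟨hτ.1, hle⟩]
    rcases le_or_gt τs τc with h | h
    · rw [min_eq_left h, hW1 τs ⟨hτs0.le, h⟩]
      exact mul_le_mul_of_nonneg_left (hRle τ hτ) hρN.le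
    · rw [min_eq_right h.le, hW1 τc ⟨hτc0.le, le_refl _⟩]
      have : R τ ≤ R τc := by
        rcases eq_or_lt_of_le hle with h' | h'
        · rw [h']
        · exact (hRmono ⟨hτ.1, hle.trans h.le⟩ ⟨hτc0.le, h.le⟩ h').le
      exact mul_le_mul_of_nonneg_left this hρN.le
  · -- beyond capacity: W decreasing
    have : W τ ≤ W τc := by
      rcases eq_or_lt_of_le hgt.le with h' | h'
      · rw [← h']
      · exact (hWanti ⟨le_refl _, hτc1.le⟩ ⟨hgt.le, hτ.2⟩ h').le
    exact this.trans hWτc_le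
end

section
/- Under the setup of the fluid model with differentiable per-slot efficacy R(τ, p_0) and capacity-matching threshold τ_c(p_0) = 1 − (ρ − p_0)/Δ_P (with ρ ∈ (p_0, p_0 + Δ_P) fixed so that p_0 + Δ_P(1 − τ_c(p_0)) = ρ), the total derivative of R along the capacity-matching path equals d/dp_0 [R(τ_c(p_0), p_0)] = (μ − m(τ_c(p_0))) / ρ, where μ is the unconditional mean score and m(τ) = g(τ) − (1−τ)g'(τ) is the marginal conditional mean at the threshold quantile. In particular, if m(τ_c(p_0)) > μ, this derivative is negative. -/
/-!
Along the capacity-matching path the load `p + ΔP (1 - τ_c(p))` is identically `ρ`, so the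
quotient defining `R` has constant denominator and only its numerator has to be differentiated.
Since `dτ_c/dp = 1/ΔP`, the tail term `ΔP (1 - τ_c) g(τ_c)` has derivative
`-g(τ_c) + (1 - τ_c) g'(τ_c) = -m(τ_c)`, while `p μ` contributes `μ`.
-/

noncomputable def capacityThreshold (ρ ΔP p : ℝ) : ℝ := 1 - (ρ - p) / ΔP

lemma capacityThreshold_load {ρ ΔP : ℝ} (hΔ : ΔP ≠ 0) (p : ℝ) :
    p + ΔP * (1 - capacityThreshold ρ ΔP p) = ρ := by
  unfold capacityThreshold
  field_simp
  ring

lemma hasDerivAt_capacityThreshold (ρ ΔP p : ℝ) :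
    HasDerivAt (capacityThreshold ρ ΔP) ΔP⁻¹ p := by
  have h := (((hasDerivAt_id' p).const_sub ρ).div_const ΔP).const_sub 1
  exact h.congr_deriv (by ring)

lemma hasDerivAt_mul_one_sub_mul_comp {ΔP g' p : ℝ} {g τ : ℝ → ℝ} (hΔ : ΔP ≠ 0)
    (hτ : HasDerivAt τ ΔP⁻¹ p) (hg : HasDerivAt g g' (τ p)) :
    HasDerivAt (fun q => ΔP * (1 - τ q) * g (τ q)) (-(g (τ p) - (1 - τ p) * g')) p := by
  have h := ((hτ.const_sub 1).const_mul ΔP).fun_mul (hg.comp p hτ)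
  exact h.congr_deriv (by field_simp; simp only [Function.comp_apply]; ring)

/-- Total derivative of per-slot efficacy along the capacity-matching path:
with `τ_c(p) = 1 − (ρ − p)/ΔP` (so `p + ΔP(1 − τ_c(p)) = ρ`),
`d/dp0 [R(τ_c(p0), p0)] = (μ − m(τ_c(p0)))/ρ`; in particular it is negative when
`m(τ_c(p0)) > μ`. -/
theorem stmt_11 (p0 ΔP ρ μ : ℝ) (hp0 : 0 < p0) (hΔ : 0 < ΔP)
    (hρ : ρ ∈ Set.Ioo p0 (p0 + ΔP))
    (g : ℝ → ℝ) (hg : Differentiable ℝ g)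
    (m : ℝ → ℝ) (hm : ∀ τ, m τ = g τ - (1 - τ) * deriv g τ)
    (τc : ℝ → ℝ) (hτc : ∀ p, τc p = 1 - (ρ - p) / ΔP)
    (F : ℝ → ℝ)
    (hF : ∀ p, F p = (p * μ + ΔP * (1 - τc p) * g (τc p)) / (p + ΔP * (1 - τc p))) :
    deriv F p0 = (μ - m (τc p0)) / ρ ∧ (μ < m (τc p0) → deriv F p0 < 0) := by
  have hτc' : τc = capacityThreshold ρ ΔP := funext hτc
  subst hτc'
  have hF' : F = fun p => (p * μ + ΔP * (1 - capacityThreshold ρ ΔP p) *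
      g (capacityThreshold ρ ΔP p)) / ρ := by
    funext p
    rw [hF, capacityThreshold_load hΔ.ne']
  have hderiv : HasDerivAt F ((μ - m (capacityThreshold ρ ΔP p0)) / ρ) p0 := by
    have hnum := ((hasDerivAt_id' p0).mul_const μ).fun_add (hasDerivAt_mul_one_sub_mul_comp hΔ.ne'
      (hasDerivAt_capacityThreshold ρ ΔP p0) (hg _).hasDerivAt)
    rw [hF', hm]
    exact (hnum.div_const ρ).congr_deriv (by ring)
  have hρ0 : 0 < ρ := hp0.trans hρ.1
  refine ⟨hderiv.deriv, fun hlt => ?_⟩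
  rw [hderiv.deriv]
  exact div_neg_of_neg_of_pos (sub_neg.mpr hlt) hρ0
end
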